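/- arXiv:1709.06281 — 2 statements merged into one kernel-verified Lean document; each statement's English description precedes it below -/
import Mathlib

section
/- Let K > S ≥ 0 be integers and M, N > 0 reals with M(K-S)/N > 1 and M < N. Then the polynomial g(r) = Σ_{i=0}^{K-S-1} C(K-S, i)(-M/N)^{K-S-i} r^{K-S-1-i} + 1 satisfies g(0) < 0 and g(1) > 0, and thus has a real root in (0, 1). -/
/-! At `r = 0` only the term `i = K - S - 1` survives, so `g 0 = 1 - (K - S) M / N`; at `r = 1`
the binomial theorem gives `g 1 = (1 - M / N) ^ (K - S)`. The intermediate value theorem then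
yields the root. -/

open Finset

section ChooseSums

variable {R : Type*} [Semiring R]

theorem sum_range_choose_mul_pow_mul_zero_pow (n : ℕ) (a : R) :
    ∑ i ∈ range n, (n.choose i : R) * a ^ (n - i) * 0 ^ (n - 1 - i) = n * a := by
  rcases Nat.eq_zero_or_pos n with rfl | hn
  · simp
  rw [sum_eq_single_of_mem (n - 1) (mem_range.mpr (Nat.sub_lt hn one_pos))]
  · have hn1 : 1 ≤ n := hn
    rw [Nat.choose_symm hn1, Nat.choose_one_right, Nat.sub_sub_self hn1, Nat.sub_self]
    simp
  · intro i hi hne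
    rw [zero_pow (by rw [mem_range] at hi; omega), mul_zero]

theorem sum_range_choose_mul_pow_mul_one_pow_add_one (n : ℕ) (a : R) :
    ∑ i ∈ range n, (n.choose i : R) * a ^ (n - i) * 1 ^ (n - 1 - i) + 1 = (1 + a) ^ n := by
  rw [(Commute.one_left a).add_pow, sum_range_succ]
  simp [(Nat.cast_commute _ _).eq]

end ChooseSums

theorem stmt9_general (K S : ℕ) (M N : ℝ) (hN : 0 < N)
    (hMK : 1 < M * (K - S : ℕ) / N) (hMN : M < N)
    (g : ℝ → ℝ)
    (hg : ∀ r, g r = ∑ i ∈ Finset.range (K - S),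
        ((K - S).choose i : ℝ) * (-(M / N)) ^ (K - S - i) * r ^ (K - S - 1 - i) + 1) :
    g 0 < 0 ∧ 0 < g 1 ∧ ∃ r ∈ Set.Ioo (0 : ℝ) 1, g r = 0 := by
  have hg0 : g 0 < 0 := by
    rw [hg, sum_range_choose_mul_pow_mul_zero_pow, mul_neg, ← mul_div_assoc, mul_comm]
    linarith
  have hg1 : 0 < g 1 := by
    rw [hg, sum_range_choose_mul_pow_mul_one_pow_add_one, ← sub_eq_add_neg]
    exact pow_pos (sub_pos.mpr ((div_lt_one hN).mpr hMN)) _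
  have hcont : Continuous g := by
    rw [funext hg]
    fun_prop
  obtain ⟨r, hr, hgr⟩ := intermediate_value_Ioo zero_le_one hcont.continuousOn ⟨hg0, hg1⟩
  exact ⟨hg0, hg1, r, hr, hgr⟩

theorem stmt9 (K S : ℕ) (hS : S < K) (M N : ℝ) (hM : 0 < M) (hN : 0 < N)
    (hMK : 1 < M * (K - S : ℕ) / N) (hMN : M < N)
    (g : ℝ → ℝ)
    (hg : ∀ r, g r = ∑ i ∈ Finset.range (K - S),
        ((K - S).choose i : ℝ) * (-(M / N)) ^ (K - S - i) * r ^ (K - S - 1 - i) + 1) :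
    g 0 < 0 ∧ 0 < g 1 ∧ ∃ r ∈ Set.Ioo (0 : ℝ) 1, g r = 0 :=
  stmt9_general K S M N hN hMK hMN g hg
end

section
/- For integers K ≥ 2, 1 ≤ t ≤ K-1, and 0 ≤ S ≤ t-1, the rate R(M) = (1/(t·C(K,t))) · Σ_{i=0}^{S} C(S,i)·C(K-S, t+1-i)·(t+1+⌈i/(t-i)⌉) satisfies R(M) ≥ (K-t)/t, with equality when S = 0. -/
/-!
Splitting off the ceiling, the rate is the cooperative term
`(t+1) · Σᵢ C(S,i) C(K-S,t+1-i) / (t C(K,t))` plus a sum of nonnegative terms.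
By Vandermonde the weights add up to `C(K,t+1)`, and `(t+1) C(K,t+1) = (K-t) C(K,t)`,
so the cooperative term is exactly `(K-t)/t`. For `S = 0` only `i = 0` occurs, whose ceiling is `0`.
-/

open Finset

theorem Nat.sum_range_choose_mul_choose_sub (m n k : ℕ) (h : m ≤ k) :
    ∑ i ∈ range (m + 1), m.choose i * n.choose (k - i) = (m + n).choose k := by
  rw [Nat.add_choose_eq, Nat.sum_antidiagonal_eq_sum_range_succ_mk]
  refine sum_subset (fun i hi => by simp only [mem_range] at hi ⊢; omega) fun i hi hi' => ?_
  simp only [mem_range, not_lt] at hi'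
  rw [Nat.choose_eq_zero_of_lt (by omega), zero_mul]

theorem Nat.succ_mul_choose_succ_cast {R : Type*} [CommRing R] {n k : ℕ} (h : k ≤ n) :
    ((k : R) + 1) * n.choose (k + 1) = ((n : R) - k) * n.choose k := by
  have := congrArg (Nat.cast (R := R)) (Nat.choose_succ_right_eq n k)
  push_cast [Nat.cast_sub h] at this
  linear_combination this

theorem choose_weighted_rate_eq_sub_div_add {K t S : ℕ} (ht : 0 < t) (htK : t ≤ K) (hSt : S ≤ t)
    (f : ℕ → ℝ) :
    (1 / ((t : ℝ) * K.choose t)) *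
        ∑ i ∈ range (S + 1), (S.choose i : ℝ) * ((K - S).choose (t + 1 - i) : ℝ) * ((t : ℝ) + 1 + f i)
      = ((K : ℝ) - t) / t +
        (1 / ((t : ℝ) * K.choose t)) *
          ∑ i ∈ range (S + 1), (S.choose i : ℝ) * ((K - S).choose (t + 1 - i) : ℝ) * f i := by
  have hvandermonde : ∑ i ∈ range (S + 1), (S.choose i : ℝ) * ((K - S).choose (t + 1 - i) : ℝ)
      = K.choose (t + 1) := by
    exact_mod_cast (Nat.add_sub_cancel' (hSt.trans htK)) ▸
      Nat.sum_range_choose_mul_choose_sub S (K - S) (t + 1) (by omega)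
  have hchoose : (0 : ℝ) < K.choose t := by exact_mod_cast Nat.choose_pos htK
  have ht' : (0 : ℝ) < t := by exact_mod_cast ht
  have hsucc := Nat.succ_mul_choose_succ_cast (R := ℝ) htK
  simp only [mul_add, sum_add_distrib, ← sum_mul, hvandermonde]
  field_simp
  linear_combination hsucc

theorem ceil_div_sub_nonneg {i t : ℕ} (h : i ≤ t) : (0 : ℝ) ≤ (⌈(i : ℝ) / ((t : ℝ) - i)⌉ : ℝ) := by
  have : (i : ℝ) ≤ t := by exact_mod_cast h
  exact_mod_cast Int.ceil_nonneg (div_nonneg i.cast_nonneg (by linarith))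

theorem stmt15_general (K t S : ℕ) (ht1 : 1 ≤ t) (ht2 : t ≤ K - 1) (hS : S ≤ t - 1) :
    (1 / ((t : ℝ) * K.choose t)) *
        ∑ i ∈ Finset.range (S + 1),
          (S.choose i : ℝ) * ((K - S).choose (t + 1 - i) : ℝ) *
            ((t : ℝ) + 1 + (⌈(i : ℝ) / ((t : ℝ) - i)⌉ : ℝ))
      ≥ ((K : ℝ) - t) / t ∧
    (S = 0 →
      (1 / ((t : ℝ) * K.choose t)) *
          ∑ i ∈ Finset.range (S + 1),
            (S.choose i : ℝ) * ((K - S).choose (t + 1 - i) : ℝ) *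
              ((t : ℝ) + 1 + (⌈(i : ℝ) / ((t : ℝ) - i)⌉ : ℝ))
        = ((K : ℝ) - t) / t) := by
  rw [choose_weighted_rate_eq_sub_div_add (by omega) (by omega) (by omega)]
  refine ⟨le_add_of_nonneg_right ?_, fun hS0 => ?_⟩
  · refine mul_nonneg (by positivity) (sum_nonneg fun i hi => mul_nonneg (by positivity) ?_)
    exact ceil_div_sub_nonneg (by simp only [mem_range] at hi; omega)
  · subst hS0
    simp

theorem stmt15 (K t S : ℕ) (hK : 2 ≤ K) (ht1 : 1 ≤ t) (ht2 : t ≤ K - 1) (hS : S ≤ t - 1) :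
    (1 / ((t : ℝ) * K.choose t)) *
        ∑ i ∈ Finset.range (S + 1),
          (S.choose i : ℝ) * ((K - S).choose (t + 1 - i) : ℝ) *
            ((t : ℝ) + 1 + (⌈(i : ℝ) / ((t : ℝ) - i)⌉ : ℝ))
      ≥ ((K : ℝ) - t) / t ∧
    (S = 0 →
      (1 / ((t : ℝ) * K.choose t)) *
          ∑ i ∈ Finset.range (S + 1),
            (S.choose i : ℝ) * ((K - S).choose (t + 1 - i) : ℝ) *
              ((t : ℝ) + 1 + (⌈(i : ℝ) / ((t : ℝ) - i)⌉ : ℝ))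
        = ((K : ℝ) - t) / t) :=
  stmt15_general K t S ht1 ht2 hS
end
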